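/- Let 𝔰 = 𝔤₃,₄^{-1} ⊕ 𝔤₃,₄^{-1} with basis e₁,…,e₆ and brackets [e₁,e₃] = e₁, [e₂,e₃] = -e₂, [e₄,e₆] = e₄, [e₅,e₆] = -e₅ (all others zero). The nilradical of 𝔰 is 𝔫 = span(e₁,e₂,e₄,e₅) (abelian), and every derivation D of 𝔰 such that tr(ad_X restricted to 𝔫) = 0 and tr(ad_X on (𝔰⋊_Dℝ)/𝔫') = 0 for all X in the one-dimensional extension 𝔰 ⋊_D ℝ (strong unimodularity) preserves each of span(e₁), span(e₂), span(e₄), span(e₅), maps e₃ into span(e₁,e₂,e₃) and e₆ into span(e₄,e₅,e₆), and satisfies De₁ = a₁e₁, De₂ = a₃e₂, De₄ = a₅e₄, De₅ = -(a₁+a₃+a₅)e₅ for some a₁,a₃,a₅ ∈ ℝ. -/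

import Mathlib

/-!
Statement 11: on 𝔰 = 𝔤₃,₄^{-1} ⊕ 𝔤₃,₄^{-1} ([e₁,e₃]=e₁, [e₂,e₃]=-e₂, [e₄,e₆]=e₄,
[e₅,e₆]=-e₅), the nilradical is the abelian ideal 𝔫 = span(e₁,e₂,e₄,e₅), and every
derivation D whose extension 𝔰 ⋊_D ℝ is strongly unimodular preserves each of span(e₁),
span(e₂), span(e₄), span(e₅), maps e₃ into span(e₁,e₂,e₃) and e₆ into span(e₄,e₅,e₆),
with De₁ = a₁e₁, De₂ = a₃e₂, De₄ = a₅e₄, De₅ = -(a₁+a₃+a₅)e₅.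
-/

noncomputable section

abbrev V6 := Fin 6 → ℝ
abbrev V7 := Fin 7 → ℝ

def e6 (i : Fin 6) : V6 := Pi.single i 1

/-- the span of all brackets of elements of `A` with elements of `B` -/
def brSub {V : Type*} [AddCommGroup V] [Module ℝ V] (br : V → V → V)
    (A B : Submodule ℝ V) : Submodule ℝ V :=
  Submodule.span ℝ {z | ∃ a ∈ A, ∃ b ∈ B, z = br a b}

/-- the descending central series of a subalgebra `N`: `N⁰ = N`, `N^{k+1} = [N, N^k]` -/
def lcs {V : Type*} [AddCommGroup V] [Module ℝ V] (br : V → V → V)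
    (N : Submodule ℝ V) : ℕ → Submodule ℝ V
  | 0 => N
  | k + 1 => brSub br N (lcs br N k)

def IsIdeal {V : Type*} [AddCommGroup V] [Module ℝ V] (br : V → V → V)
    (N : Submodule ℝ V) : Prop :=
  ∀ x : V, ∀ y ∈ N, br x y ∈ N ∧ br y x ∈ N

def IsNilpotentIdeal {V : Type*} [AddCommGroup V] [Module ℝ V] (br : V → V → V)
    (N : Submodule ℝ V) : Prop :=
  IsIdeal br N ∧ ∃ k, lcs br N k = ⊥

/-- `N` is the nilradical: the maximal nilpotent ideal -/
def IsNilradical {V : Type*} [AddCommGroup V] [Module ℝ V] (br : V → V → V)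
    (N : Submodule ℝ V) : Prop :=
  IsNilpotentIdeal br N ∧ ∀ M : Submodule ℝ V, IsNilpotentIdeal br M → M ≤ N

/-- Strong unimodularity: for every `X`, the endomorphism `ad_X = br X ·` induces a
traceless map on each quotient `𝔫^i/𝔫^{i+1}` of the descending central series of the
nilradical `𝔫`; equivalently (for an operator preserving both terms), its traces on
`𝔫^i` and on `𝔫^{i+1}` agree. -/
def StronglyUnimodular {V : Type*} [AddCommGroup V] [Module ℝ V] (br : V → V → V) : Prop :=
  ∀ N : Submodule ℝ V, IsNilradical br N →
    ∀ (X : V) (L : V →ₗ[ℝ] V), (∀ y, L y = br X y) →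
      ∀ (i : ℕ) (h : ∀ y ∈ lcs br N i, L y ∈ lcs br N i)
        (h' : ∀ y ∈ lcs br N (i + 1), L y ∈ lcs br N (i + 1)),
        LinearMap.trace ℝ _ (L.restrict h) = LinearMap.trace ℝ _ (L.restrict h')

/-- the one-dimensional extension `𝔰 ⋊_D ℝ`, with `[z, x] = D x` for the generator
`z = e₇` of the `ℝ`-factor. -/
def brExt (br : V6 → V6 → V6) (D : V6 →ₗ[ℝ] V6) : V7 → V7 → V7 := fun x y =>
  Fin.snoc
    (br (Fin.init x) (Fin.init y) + x (Fin.last 6) • D (Fin.init y)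
      - y (Fin.last 6) • D (Fin.init x))
    (0 : ℝ)

/-- Lie bracket of `𝔤₃,₄^{-1} ⊕ 𝔤₃,₄^{-1}`. -/
def br34 : V6 → V6 → V6 := fun x y =>
  (x 0 * y 2 - x 2 * y 0) • e6 0 - (x 1 * y 2 - x 2 * y 1) • e6 1
    + (x 3 * y 5 - x 5 * y 3) • e6 3 - (x 4 * y 5 - x 5 * y 4) • e6 4

/- ### auxiliary infrastructure -/

set_option maxRecDepth 10000

lemma br_0 (x y : V6) : br34 x y 0 = x 0 * y 2 - x 2 * y 0 := by simp [br34, e6, Pi.single_apply]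
lemma br_1 (x y : V6) : br34 x y 1 = -(x 1 * y 2 - x 2 * y 1) := by simp [br34, e6, Pi.single_apply]
lemma br_2 (x y : V6) : br34 x y 2 = 0 := by simp [br34, e6, Pi.single_apply]
lemma br_3 (x y : V6) : br34 x y 3 = x 3 * y 5 - x 5 * y 3 := by simp [br34, e6, Pi.single_apply]
lemma br_4 (x y : V6) : br34 x y 4 = -(x 4 * y 5 - x 5 * y 4) := by simp [br34, e6, Pi.single_apply]
lemma br_5 (x y : V6) : br34 x y 5 = 0 := by simp [br34, e6, Pi.single_apply]

lemma eig_zero {V : Type*} [AddCommGroup V] [Module ℝ V] {br : V → V → V} {I : Submodule ℝ V}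
    (hI : IsNilpotentIdeal br I) {x : V} (hx : x ∈ I) {v : V} (hv : v ≠ 0) {l : ℝ}
    (h : br x v = l • v) : l = 0 := by
  by_contra hl
  have hrev : v = l⁻¹ • br x v := by rw [h, smul_smul, inv_mul_cancel₀ hl, one_smul]
  have hvI : v ∈ I := by
    rw [hrev]; exact Submodule.smul_mem _ _ (hI.1 v x hx).2
  have hvk : ∀ k, v ∈ lcs br I k := by
    intro k
    induction k with
    | zero => exact hvI
    | succ k ih =>
      have hbr : br x v ∈ lcs br I (k + 1) :=
        Submodule.subset_span ⟨x, hx, v, ih, rfl⟩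
      rw [hrev]; exact Submodule.smul_mem _ _ hbr
  obtain ⟨k, hk⟩ := hI.2
  have := hvk k
  rw [hk, Submodule.mem_bot] at this
  exact hv this

lemma coord_M6 {x : V6} (hx : x ∈ Submodule.span ℝ ({e6 0, e6 1, e6 3, e6 4} : Set V6)) :
    x 2 = 0 ∧ x 5 = 0 := by
  refine Submodule.span_induction ?_ ⟨rfl, rfl⟩ ?_ ?_ hx
  · intro z hz
    rcases hz with h | h | h | h <;> subst h <;>
      exact ⟨by simp [e6, Pi.single_apply], by simp [e6, Pi.single_apply]⟩
  · intro u v _ _ hu hv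
    exact ⟨by simp [Pi.add_apply, hu.1, hv.1], by simp [Pi.add_apply, hu.2, hv.2]⟩
  · intro c u _ hu
    exact ⟨by simp [Pi.smul_apply, hu.1], by simp [Pi.smul_apply, hu.2]⟩

lemma mem_M6 {x : V6} (h2 : x 2 = 0) (h5 : x 5 = 0) :
    x ∈ Submodule.span ℝ ({e6 0, e6 1, e6 3, e6 4} : Set V6) := by
  have hx : x = x 0 • e6 0 + x 1 • e6 1 + x 3 • e6 3 + x 4 • e6 4 := by
    funext i; fin_cases i <;> simp [e6, Pi.single_apply, h2, h5]
  rw [hx]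
  have m0 : e6 0 ∈ ({e6 0, e6 1, e6 3, e6 4} : Set V6) := by simp
  have m1 : e6 1 ∈ ({e6 0, e6 1, e6 3, e6 4} : Set V6) := by simp
  have m3 : e6 3 ∈ ({e6 0, e6 1, e6 3, e6 4} : Set V6) := by simp
  have m4 : e6 4 ∈ ({e6 0, e6 1, e6 3, e6 4} : Set V6) := by simp
  exact Submodule.add_mem _ (Submodule.add_mem _ (Submodule.add_mem _
    (Submodule.smul_mem _ _ (Submodule.subset_span m0))
    (Submodule.smul_mem _ _ (Submodule.subset_span m1)))
    (Submodule.smul_mem _ _ (Submodule.subset_span m3)))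
    (Submodule.smul_mem _ _ (Submodule.subset_span m4))

lemma br34_of_coords {u v : V6} (hu2 : u 2 = 0) (hu5 : u 5 = 0) (hv2 : v 2 = 0)
    (hv5 : v 5 = 0) : br34 u v = 0 := by
  funext i
  fin_cases i <;> simp [br_0, br_1, br_2, br_3, br_4, br_5, hu2, hu5, hv2, hv5]

lemma e6_ne_zero (i : Fin 6) : e6 i ≠ 0 := by
  intro h
  have := congrFun h i
  simp [e6, Pi.single_apply] at this

lemma br34_e0 (x : V6) : br34 x (e6 0) = (-(x 2)) • e6 0 := by
  funext i
  fin_cases i <;> simp [br_0, br_1, br_2, br_3, br_4, br_5, e6, Pi.single_apply]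

lemma br34_e1 (x : V6) : br34 x (e6 1) = (x 2) • e6 1 := by
  funext i
  fin_cases i <;> simp [br_0, br_1, br_2, br_3, br_4, br_5, e6, Pi.single_apply]

lemma br34_e3 (x : V6) : br34 x (e6 3) = (-(x 5)) • e6 3 := by
  funext i
  fin_cases i <;> simp [br_0, br_1, br_2, br_3, br_4, br_5, e6, Pi.single_apply]

lemma br34_e4 (x : V6) : br34 x (e6 4) = (x 5) • e6 4 := by
  funext i
  fin_cases i <;> simp [br_0, br_1, br_2, br_3, br_4, br_5, e6, Pi.single_apply]

lemma br34_zero_left (y : V6) : br34 0 y = 0 := by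
  funext i
  fin_cases i <;> simp [br_0, br_1, br_2, br_3, br_4, br_5]

lemma nilrad_M6 : IsNilradical br34 (Submodule.span ℝ ({e6 0, e6 1, e6 3, e6 4} : Set V6)) := by
  refine ⟨⟨?_, 1, ?_⟩, ?_⟩
  · intro x y _
    exact ⟨mem_M6 (br_2 x y) (br_5 x y), mem_M6 (br_2 y x) (br_5 y x)⟩
  · show brSub br34 _ _ = ⊥
    rw [brSub, Submodule.span_eq_bot]
    rintro z ⟨a, ha, b, hb, rfl⟩
    obtain ⟨ha2, ha5⟩ := coord_M6 ha
    obtain ⟨hb2, hb5⟩ := coord_M6 hb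
    exact br34_of_coords ha2 ha5 hb2 hb5
  · intro M hM x hx
    have h2 : -(x 2) = 0 := eig_zero hM hx (e6_ne_zero 0) (br34_e0 x)
    have h5 : -(x 5) = 0 := eig_zero hM hx (e6_ne_zero 3) (br34_e3 x)
    exact mem_M6 (by linarith) (by linarith)

-- basis bracket values
lemma br_b02 : br34 (e6 0) (e6 2) = e6 0 := by
  funext i; fin_cases i <;> simp [br_0, br_1, br_2, br_3, br_4, br_5, e6, Pi.single_apply]
lemma br_b12 : br34 (e6 1) (e6 2) = -(e6 1) := by
  funext i; fin_cases i <;> simp [br_0, br_1, br_2, br_3, br_4, br_5, e6, Pi.single_apply]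
lemma br_b35 : br34 (e6 3) (e6 5) = e6 3 := by
  funext i; fin_cases i <;> simp [br_0, br_1, br_2, br_3, br_4, br_5, e6, Pi.single_apply]
lemma br_b45 : br34 (e6 4) (e6 5) = -(e6 4) := by
  funext i; fin_cases i <;> simp [br_0, br_1, br_2, br_3, br_4, br_5, e6, Pi.single_apply]
lemma br_b25 : br34 (e6 2) (e6 5) = 0 := by
  funext i; fin_cases i <;> simp [br_0, br_1, br_2, br_3, br_4, br_5, e6, Pi.single_apply]
lemma br_b05 : br34 (e6 0) (e6 5) = 0 := by
  funext i; fin_cases i <;> simp [br_0, br_1, br_2, br_3, br_4, br_5, e6, Pi.single_apply]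
lemma br_b32 : br34 (e6 3) (e6 2) = 0 := by
  funext i; fin_cases i <;> simp [br_0, br_1, br_2, br_3, br_4, br_5, e6, Pi.single_apply]

-- V7 infrastructure
def snocL : V6 →ₗ[ℝ] V7 where
  toFun u := Fin.snoc u 0
  map_add' u v := by funext i; refine Fin.lastCases ?_ ?_ i <;> simp [Fin.snoc]
  map_smul' c u := by funext i; refine Fin.lastCases ?_ ?_ i <;> simp [Fin.snoc]

def initL : V7 →ₗ[ℝ] V6 where
  toFun := Fin.init
  map_add' x y := rfl
  map_smul' c x := rfl

def g4 : Fin 4 → Fin 6 := ![0, 1, 3, 4]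
def w4 (i : Fin 4) : V7 := snocL (e6 (g4 i))
def M7 : Submodule ℝ V7 := Submodule.span ℝ (Set.range w4)

lemma w4_eq (i : Fin 4) : w4 i = Fin.snoc (e6 (g4 i)) 0 := rfl
lemma init_w4 (i : Fin 4) : Fin.init (w4 i) = e6 (g4 i) := by
  rw [w4_eq, Fin.init_snoc]
lemma last_w4 (i : Fin 4) : (w4 i) (Fin.last 6) = 0 := by
  rw [w4_eq, Fin.snoc_last]

lemma w4_ne_zero (i : Fin 4) : w4 i ≠ 0 := by
  intro h
  have := congrFun (congrArg Fin.init h) (g4 i)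
  rw [init_w4] at this
  exact e6_ne_zero (g4 i) (funext fun j => by
    by_cases hj : j = g4 i
    · subst hj; simpa [Fin.init] using this
    · simp [e6, Pi.single_apply, hj])

lemma coord_M7 {x : V7} (hx : x ∈ M7) : x 2 = 0 ∧ x 5 = 0 ∧ x 6 = 0 := by
  refine Submodule.span_induction ?_ ⟨rfl, rfl, rfl⟩ ?_ ?_ hx
  · rintro z ⟨i, rfl⟩
    fin_cases i <;>
      refine ⟨?_, ?_, ?_⟩ <;>
      simp (config := { decide := true })
        [w4, snocL, g4, e6, Pi.single_apply, Fin.snoc, Fin.ext_iff]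
  · intro u v _ _ hu hv
    exact ⟨by simp [Pi.add_apply, hu.1, hv.1], by simp [Pi.add_apply, hu.2.1, hv.2.1],
      by simp [Pi.add_apply, hu.2.2, hv.2.2]⟩
  · intro c u _ hu
    exact ⟨by simp [Pi.smul_apply, hu.1], by simp [Pi.smul_apply, hu.2.1],
      by simp [Pi.smul_apply, hu.2.2]⟩

lemma mem_M7 {x : V7} (h2 : x 2 = 0) (h5 : x 5 = 0) (h6 : x 6 = 0) : x ∈ M7 := by
  have hx : x = x 0 • w4 0 + x 1 • w4 1 + x 3 • w4 2 + x 4 • w4 3 := by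
    funext i
    fin_cases i <;>
      simp (config := { decide := true })
        [w4, snocL, g4, e6, Pi.single_apply, Fin.snoc, Fin.ext_iff, h2, h5, h6]
  rw [hx]
  exact Submodule.add_mem _ (Submodule.add_mem _ (Submodule.add_mem _
    (Submodule.smul_mem _ _ (Submodule.subset_span ⟨0, rfl⟩))
    (Submodule.smul_mem _ _ (Submodule.subset_span ⟨1, rfl⟩)))
    (Submodule.smul_mem _ _ (Submodule.subset_span ⟨2, rfl⟩)))
    (Submodule.smul_mem _ _ (Submodule.subset_span ⟨3, rfl⟩))

lemma w4_li : LinearIndependent ℝ w4 := by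
  rw [Fintype.linearIndependent_iff]
  intro c hc
  have h0 := congrFun hc 0
  have h1 := congrFun hc 1
  have h3 := congrFun hc 3
  have h4 := congrFun hc 4
  simp (config := { decide := true })
    [Fin.sum_univ_four, w4, snocL, g4, e6, Pi.single_apply, Fin.snoc]
    at h0 h1 h3 h4
  intro i
  fin_cases i <;> simp [h0, h1, h3, h4]

lemma trace_diag4 {M : Type*} [AddCommGroup M] [Module ℝ M] (b : Module.Basis (Fin 4) ℝ M)
    (f : M →ₗ[ℝ] M) (a : Fin 4 → ℝ) (h : ∀ i, f (b i) = a i • b i) :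
    LinearMap.trace ℝ M f = a 0 + a 1 + a 2 + a 3 := by
  classical
  rw [LinearMap.trace_eq_matrix_trace ℝ b, Matrix.trace]
  have hd : ∀ i, (LinearMap.toMatrix b b f) i i = a i := by
    intro i
    rw [LinearMap.toMatrix_apply, h, map_smul, Finsupp.smul_apply, Module.Basis.repr_self]
    simp
  simp only [Matrix.diag]
  rw [Fin.sum_univ_four, hd, hd, hd, hd]

lemma snoc_zero_zero : (Fin.snoc (0 : V6) (0 : ℝ) : V7) = 0 := by
  funext i; refine Fin.lastCases ?_ ?_ i <;> simp [Fin.snoc]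

-- componentwise description of brExt
lemma brExt_c2 (D : V6 →ₗ[ℝ] V6) (x y : V7) :
    brExt br34 D x y 2 =
      br34 (Fin.init x) (Fin.init y) 2 + x 6 * D (Fin.init y) 2 - y 6 * D (Fin.init x) 2 := rfl
lemma brExt_c5 (D : V6 →ₗ[ℝ] V6) (x y : V7) :
    brExt br34 D x y 5 =
      br34 (Fin.init x) (Fin.init y) 5 + x 6 * D (Fin.init y) 5 - y 6 * D (Fin.init x) 5 := rfl
lemma brExt_c6 (D : V6 →ₗ[ℝ] V6) (x y : V7) : brExt br34 D x y 6 = 0 := rfl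

set_option maxHeartbeats 2000000 in
def LD (D : V6 →ₗ[ℝ] V6) : V7 →ₗ[ℝ] V7 := snocL ∘ₗ D ∘ₗ initL

lemma LD_apply (D : V6 →ₗ[ℝ] V6) (y : V7) : LD D y = snocL (D (Fin.init y)) := rfl

lemma brExt_X (D : V6 →ₗ[ℝ] V6) (y : V7) :
    brExt br34 D (Fin.snoc 0 1) y = LD D y := by
  rw [LD_apply]
  simp only [brExt]
  rw [Fin.init_snoc, Fin.snoc_last, br34_zero_left, map_zero, one_smul,
    smul_zero, zero_add, sub_zero]
  rfl

theorem strongly_unimodular_derivations_g34_g34 (D : V6 →ₗ[ℝ] V6)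
    (hD : ∀ x y : V6, D (br34 x y) = br34 (D x) y + br34 x (D y))
    (hsu : StronglyUnimodular (brExt br34 D)) :
    IsNilradical br34 (Submodule.span ℝ {e6 0, e6 1, e6 3, e6 4}) ∧
    (∀ x ∈ Submodule.span ℝ ({e6 0, e6 1, e6 3, e6 4} : Set V6),
      ∀ y ∈ Submodule.span ℝ ({e6 0, e6 1, e6 3, e6 4} : Set V6), br34 x y = 0) ∧
    D (e6 2) ∈ Submodule.span ℝ ({e6 0, e6 1, e6 2} : Set V6) ∧
    D (e6 5) ∈ Submodule.span ℝ ({e6 3, e6 4, e6 5} : Set V6) ∧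
    ∃ a1 a3 a5 : ℝ,
      D (e6 0) = a1 • e6 0 ∧ D (e6 1) = a3 • e6 1 ∧
      D (e6 3) = a5 • e6 3 ∧ D (e6 4) = (-(a1 + a3 + a5)) • e6 4 := by
  -- derivation structure
  have hF0 : D (e6 0) = (D (e6 0) 0) • e6 0 := by
    have h02 : D (e6 0) = br34 (D (e6 0)) (e6 2) + br34 (e6 0) (D (e6 2)) := by
      have h := hD (e6 0) (e6 2); rwa [br_b02] at h
    have c1 := congrFun h02 1
    have c2 := congrFun h02 2
    have c3 := congrFun h02 3
    have c4 := congrFun h02 4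
    have c5 := congrFun h02 5
    simp [br_0, br_1, br_2, br_3, br_4, br_5, e6, Pi.single_apply] at c1 c2 c3 c4 c5
    funext i
    fin_cases i <;> simp [e6, Pi.single_apply, c2, c3, c4, c5] <;> linarith
  have hF1 : D (e6 1) = (D (e6 1) 1) • e6 1 := by
    have h12 : -(D (e6 1)) = br34 (D (e6 1)) (e6 2) + br34 (e6 1) (D (e6 2)) := by
      have h := hD (e6 1) (e6 2); rwa [br_b12, map_neg] at h
    have c0 := congrFun h12 0
    have c2 := congrFun h12 2
    have c3 := congrFun h12 3
    have c4 := congrFun h12 4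
    have c5 := congrFun h12 5
    simp [br_0, br_1, br_2, br_3, br_4, br_5, e6, Pi.single_apply] at c0 c2 c3 c4 c5
    funext i
    fin_cases i <;> simp [e6, Pi.single_apply, c2, c3, c4, c5] <;> linarith
  have hF3 : D (e6 3) = (D (e6 3) 3) • e6 3 := by
    have h35 : D (e6 3) = br34 (D (e6 3)) (e6 5) + br34 (e6 3) (D (e6 5)) := by
      have h := hD (e6 3) (e6 5); rwa [br_b35] at h
    have c0 := congrFun h35 0
    have c1 := congrFun h35 1
    have c2 := congrFun h35 2
    have c4 := congrFun h35 4
    have c5 := congrFun h35 5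
    simp [br_0, br_1, br_2, br_3, br_4, br_5, e6, Pi.single_apply] at c0 c1 c2 c4 c5
    funext i
    fin_cases i <;> simp [e6, Pi.single_apply, c0, c1, c2, c5] <;> linarith
  have hF4 : D (e6 4) = (D (e6 4) 4) • e6 4 := by
    have h45 : -(D (e6 4)) = br34 (D (e6 4)) (e6 5) + br34 (e6 4) (D (e6 5)) := by
      have h := hD (e6 4) (e6 5); rwa [br_b45, map_neg] at h
    have c0 := congrFun h45 0
    have c1 := congrFun h45 1
    have c2 := congrFun h45 2
    have c3 := congrFun h45 3
    have c5 := congrFun h45 5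
    simp [br_0, br_1, br_2, br_3, br_4, br_5, e6, Pi.single_apply] at c0 c1 c2 c3 c5
    funext i
    fin_cases i <;> simp [e6, Pi.single_apply, c0, c1, c2, c5] <;> linarith
  obtain ⟨a1, ha1⟩ : ∃ c : ℝ, D (e6 0) 0 = c := ⟨_, rfl⟩
  obtain ⟨a3, ha3⟩ : ∃ c : ℝ, D (e6 1) 1 = c := ⟨_, rfl⟩
  obtain ⟨a5, ha5⟩ : ∃ c : ℝ, D (e6 3) 3 = c := ⟨_, rfl⟩
  obtain ⟨a7, ha7⟩ : ∃ c : ℝ, D (e6 4) 4 = c := ⟨_, rfl⟩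
  rw [ha1] at hF0
  rw [ha3] at hF1
  rw [ha5] at hF3
  rw [ha7] at hF4
  -- D e2 coords
  have h25 : (0 : V6) = br34 (D (e6 2)) (e6 5) + br34 (e6 2) (D (e6 5)) := by
    have h := hD (e6 2) (e6 5); rwa [br_b25, map_zero] at h
  have hd32 : D (e6 2) 3 = 0 := by
    have c := congrFun h25 3
    simp [br_0, br_1, br_2, br_3, br_4, br_5, e6, Pi.single_apply] at c
    simp only [e6]
    linarith
  have hd42 : D (e6 2) 4 = 0 := by
    have c := congrFun h25 4
    simp [br_0, br_1, br_2, br_3, br_4, br_5, e6, Pi.single_apply] at c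
    simp only [e6]
    linarith
  have hd05 : D (e6 5) 0 = 0 := by
    have c := congrFun h25 0
    simp [br_0, br_1, br_2, br_3, br_4, br_5, e6, Pi.single_apply] at c
    simp only [e6]
    linarith
  have hd15 : D (e6 5) 1 = 0 := by
    have c := congrFun h25 1
    simp [br_0, br_1, br_2, br_3, br_4, br_5, e6, Pi.single_apply] at c
    simp only [e6]
    linarith
  have hd52 : D (e6 2) 5 = 0 := by
    have h32 : (0 : V6) = br34 (D (e6 3)) (e6 2) + br34 (e6 3) (D (e6 2)) := by
      have h := hD (e6 3) (e6 2); rwa [br_b32, map_zero] at h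
    have c := congrFun h32 3
    simp [br_0, br_1, br_2, br_3, br_4, br_5, e6, Pi.single_apply] at c
    simp only [e6]
    linarith
  have hd25 : D (e6 5) 2 = 0 := by
    have h05 : (0 : V6) = br34 (D (e6 0)) (e6 5) + br34 (e6 0) (D (e6 5)) := by
      have h := hD (e6 0) (e6 5); rwa [br_b05, map_zero] at h
    have c := congrFun h05 0
    simp [br_0, br_1, br_2, br_3, br_4, br_5, e6, Pi.single_apply] at c
    simp only [e6]
    linarith
  -- D preserves coords 2,5
  have hDcoord : ∀ w : V6, w 2 = 0 → w 5 = 0 → D w 2 = 0 ∧ D w 5 = 0 := by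
    intro w h2 h5
    have hw : w = w 0 • e6 0 + w 1 • e6 1 + w 3 • e6 3 + w 4 • e6 4 := by
      funext i; fin_cases i <;> simp [e6, Pi.single_apply, h2, h5]
    rw [hw]
    simp only [map_add, map_smul, hF0, hF1, hF3, hF4]
    constructor <;> simp [e6, Pi.single_apply, smul_smul]
  -- main unimodularity identity
  have key : a1 + a3 + a5 + a7 = 0 := by
    by_cases hcase : a1 + a3 = 0 ∧ a5 + a7 = 0
    · linarith [hcase.1, hcase.2]
    · -- build nilradical M7 and apply hsu
      have hLy : ∀ y : V7, LD D y = brExt br34 D (Fin.snoc 0 1) y :=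
        fun y => (brExt_X D y).symm
      have hlcs1 : lcs (brExt br34 D) M7 1 = ⊥ := by
        show brSub (brExt br34 D) M7 (lcs (brExt br34 D) M7 0) = ⊥
        rw [brSub, Submodule.span_eq_bot]
        rintro z ⟨a, ha, b, hb, rfl⟩
        obtain ⟨ha2, ha5, ha6⟩ := coord_M7 ha
        obtain ⟨hb2, hb5, hb6⟩ := coord_M7 (hb : b ∈ M7)
        show (Fin.snoc (br34 (Fin.init a) (Fin.init b) + a (Fin.last 6) • D (Fin.init b)
          - b (Fin.last 6) • D (Fin.init a)) 0 : V7) = 0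
        rw [show a (Fin.last 6) = 0 from ha6, show b (Fin.last 6) = 0 from hb6,
          br34_of_coords ha2 ha5 hb2 hb5, zero_smul, zero_smul, add_zero, sub_zero,
          snoc_zero_zero]
      have hNil : IsNilradical (brExt br34 D) M7 := by
        refine ⟨⟨?_, 1, hlcs1⟩, ?_⟩
        · intro x y hy
          obtain ⟨hy2, hy5, hy6⟩ := coord_M7 hy
          obtain ⟨hDy2, hDy5⟩ := hDcoord (Fin.init y) hy2 hy5
          constructor
          · refine mem_M7 ?_ ?_ (brExt_c6 D x y)
            · rw [brExt_c2, br_2, hDy2, hy6]; ring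
            · rw [brExt_c5, br_5, hDy5, hy6]; ring
          · refine mem_M7 ?_ ?_ (brExt_c6 D y x)
            · rw [brExt_c2, br_2, hDy2, hy6]; ring
            · rw [brExt_c5, br_5, hDy5, hy6]; ring
        · intro I hI x hx
          have k0 : brExt br34 D x (w4 0) = (x 6 * a1 - x 2) • w4 0 := by
            show (Fin.snoc (br34 (Fin.init x) (Fin.init (w4 0))
              + x (Fin.last 6) • D (Fin.init (w4 0))
              - (w4 0) (Fin.last 6) • D (Fin.init x)) 0 : V7) = _
            rw [init_w4, last_w4, show g4 0 = 0 from rfl, br34_e0, hF0, zero_smul, sub_zero]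
            show snocL _ = _
            rw [show (-(Fin.init x 2)) • e6 0 + x (Fin.last 6) • a1 • e6 0
                = (x 6 * a1 - x 2) • e6 0 by
              show (-(x 2)) • e6 0 + x 6 • a1 • e6 0 = _
              rw [smul_smul, ← add_smul]; ring_nf]
            exact (map_smul snocL _ _)
          have k1 : brExt br34 D x (w4 1) = (x 2 + x 6 * a3) • w4 1 := by
            show (Fin.snoc (br34 (Fin.init x) (Fin.init (w4 1))
              + x (Fin.last 6) • D (Fin.init (w4 1))
              - (w4 1) (Fin.last 6) • D (Fin.init x)) 0 : V7) = _
            rw [init_w4, last_w4, show g4 1 = 1 from rfl, br34_e1, hF1, zero_smul, sub_zero]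
            show snocL _ = _
            rw [show (Fin.init x 2) • e6 1 + x (Fin.last 6) • a3 • e6 1
                = (x 2 + x 6 * a3) • e6 1 by
              show (x 2) • e6 1 + x 6 • a3 • e6 1 = _
              rw [smul_smul, ← add_smul]]
            exact (map_smul snocL _ _)
          have k3 : brExt br34 D x (w4 2) = (x 6 * a5 - x 5) • w4 2 := by
            show (Fin.snoc (br34 (Fin.init x) (Fin.init (w4 2))
              + x (Fin.last 6) • D (Fin.init (w4 2))
              - (w4 2) (Fin.last 6) • D (Fin.init x)) 0 : V7) = _
            rw [init_w4, last_w4, show g4 2 = 3 from rfl, br34_e3, hF3, zero_smul, sub_zero]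
            show snocL _ = _
            rw [show (-(Fin.init x 5)) • e6 3 + x (Fin.last 6) • a5 • e6 3
                = (x 6 * a5 - x 5) • e6 3 by
              show (-(x 5)) • e6 3 + x 6 • a5 • e6 3 = _
              rw [smul_smul, ← add_smul]; ring_nf]
            exact (map_smul snocL _ _)
          have k4 : brExt br34 D x (w4 3) = (x 5 + x 6 * a7) • w4 3 := by
            show (Fin.snoc (br34 (Fin.init x) (Fin.init (w4 3))
              + x (Fin.last 6) • D (Fin.init (w4 3))
              - (w4 3) (Fin.last 6) • D (Fin.init x)) 0 : V7) = _
            rw [init_w4, last_w4, show g4 3 = 4 from rfl, br34_e4, hF4, zero_smul, sub_zero]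
            show snocL _ = _
            rw [show (Fin.init x 5) • e6 4 + x (Fin.last 6) • a7 • e6 4
                = (x 5 + x 6 * a7) • e6 4 by
              show (x 5) • e6 4 + x 6 • a7 • e6 4 = _
              rw [smul_smul, ← add_smul]]
            exact (map_smul snocL _ _)
          have e0 := eig_zero hI hx (w4_ne_zero 0) k0
          have e1 := eig_zero hI hx (w4_ne_zero 1) k1
          have e3 := eig_zero hI hx (w4_ne_zero 2) k3
          have e4 := eig_zero hI hx (w4_ne_zero 3) k4
          have hm13 : x 6 * (a1 + a3) = 0 := by linear_combination e0 + e1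
          have hm57 : x 6 * (a5 + a7) = 0 := by linear_combination e3 + e4
          have hx6 : x 6 = 0 := by
            by_cases h13 : a1 + a3 = 0
            · have h57 : a5 + a7 ≠ 0 := fun h => hcase ⟨h13, h⟩
              exact (mul_eq_zero.mp hm57).resolve_right h57
            · exact (mul_eq_zero.mp hm13).resolve_right h13
          have hx2 : x 2 = 0 := by rw [hx6] at e0; linarith [e0]
          have hx5 : x 5 = 0 := by rw [hx6] at e3; linarith [e3]
          exact mem_M7 hx2 hx5 hx6
      -- traces
      have h0 : ∀ y ∈ lcs (brExt br34 D) M7 0, LD D y ∈ lcs (brExt br34 D) M7 0 := by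
        intro y hy
        obtain ⟨h2, h5, h6⟩ := coord_M7 (hy : y ∈ M7)
        obtain ⟨g2, g5⟩ := hDcoord (Fin.init y) h2 h5
        show LD D y ∈ M7
        exact mem_M7 g2 g5 rfl
      have h1 : ∀ y ∈ lcs (brExt br34 D) M7 (0 + 1), LD D y ∈ lcs (brExt br34 D) M7 (0 + 1) := by
        intro y hy
        have hy0 : y = 0 := by
          have : y ∈ (⊥ : Submodule ℝ V7) := hlcs1 ▸ hy
          simpa using this
        subst hy0
        rw [map_zero]
        exact Submodule.zero_mem _
      have htr := hsu M7 hNil (Fin.snoc 0 1) (LD D) hLy 0 h0 h1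
      have hR : LinearMap.trace ℝ _ ((LD D).restrict h1) = 0 := by
        have hzero : (LD D).restrict h1 = 0 := by
          apply LinearMap.ext
          rintro ⟨y, hy⟩
          have hy0 : y = 0 := by
            have : y ∈ (⊥ : Submodule ℝ V7) := hlcs1 ▸ hy
            simpa using this
          apply Subtype.ext
          simp [LinearMap.restrict_apply, hy0]
        rw [hzero, map_zero]
      have hLw : ∀ i : Fin 4, LD D (w4 i) = (![a1, a3, a5, a7] i) • w4 i := by
        intro i
        have hstep : LD D (w4 i) = snocL (D (e6 (g4 i))) := by
          rw [LD_apply, init_w4]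
        fin_cases i <;> rw [hstep] <;>
          simp [g4, w4, hF0, hF1, hF3, hF4, map_smul]
      have hLtr : LinearMap.trace ℝ _ ((LD D).restrict h0) = a1 + a3 + a5 + a7 := by
        let hb : Module.Basis (Fin 4) ℝ (lcs (brExt br34 D) M7 0) := Module.Basis.span w4_li
        have hbapply : ∀ i, ((hb i : V7)) = w4 i := fun i => congrArg Subtype.val (Module.Basis.span_apply w4_li i)
        have hdiag : ∀ i, ((LD D).restrict h0) (hb i) = (![a1, a3, a5, a7] i) • hb i := by
          intro i
          apply Subtype.ext
          simp [LinearMap.restrict_apply, hbapply, hLw i]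
        have := trace_diag4 hb ((LD D).restrict h0) ![a1, a3, a5, a7] hdiag
        simpa using this
      rw [hLtr, hR] at htr
      linarith
  -- assemble the conclusion
  refine ⟨nilrad_M6, ?_, ?_, ?_, a1, a3, a5, hF0, hF1, hF3, ?_⟩
  · intro x hx y hy
    obtain ⟨hx2, hx5⟩ := coord_M6 hx
    obtain ⟨hy2, hy5⟩ := coord_M6 hy
    exact br34_of_coords hx2 hx5 hy2 hy5
  · have hd32' := hd32
    have hd42' := hd42
    have hd52' := hd52
    simp only [e6] at hd32' hd42' hd52'
    have hde2 : D (e6 2) = D (e6 2) 0 • e6 0 + D (e6 2) 1 • e6 1 + D (e6 2) 2 • e6 2 := by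
      funext i; fin_cases i <;> simp [e6, Pi.single_apply, hd32', hd42', hd52']
    rw [hde2]
    have m0 : e6 0 ∈ ({e6 0, e6 1, e6 2} : Set V6) := by simp
    have m1 : e6 1 ∈ ({e6 0, e6 1, e6 2} : Set V6) := by simp
    have m2 : e6 2 ∈ ({e6 0, e6 1, e6 2} : Set V6) := by simp
    exact Submodule.add_mem _ (Submodule.add_mem _
      (Submodule.smul_mem _ _ (Submodule.subset_span m0))
      (Submodule.smul_mem _ _ (Submodule.subset_span m1)))
      (Submodule.smul_mem _ _ (Submodule.subset_span m2))
  · have hd05' := hd05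
    have hd15' := hd15
    have hd25' := hd25
    simp only [e6] at hd05' hd15' hd25'
    have hde5 : D (e6 5) = D (e6 5) 3 • e6 3 + D (e6 5) 4 • e6 4 + D (e6 5) 5 • e6 5 := by
      funext i; fin_cases i <;> simp [e6, Pi.single_apply, hd05', hd15', hd25']
    rw [hde5]
    have m3 : e6 3 ∈ ({e6 3, e6 4, e6 5} : Set V6) := by simp
    have m4 : e6 4 ∈ ({e6 3, e6 4, e6 5} : Set V6) := by simp
    have m5 : e6 5 ∈ ({e6 3, e6 4, e6 5} : Set V6) := by simp
    exact Submodule.add_mem _ (Submodule.add_mem _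
      (Submodule.smul_mem _ _ (Submodule.subset_span m3))
      (Submodule.smul_mem _ _ (Submodule.subset_span m4)))
      (Submodule.smul_mem _ _ (Submodule.subset_span m5))
  · rw [hF4, show a7 = -(a1 + a3 + a5) by linarith]

end
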